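/- If G' is obtained from a simple graph G by local complementation at a vertex v, then G' is connected if and only if G is connected. -/

import Mathlib

/-- The local complement of a simple graph `G` at a vertex `v`: adjacency among pairs of
distinct neighbors of `v` is complemented, all other adjacencies are unchanged. -/
def localComplement {V : Type*} (G : SimpleGraph V) (v : V) : SimpleGraph V where
  Adj x y := x ≠ y ∧
    ((G.Adj v x ∧ G.Adj v y ∧ ¬ G.Adj x y) ∨ (G.Adj x y ∧ ¬ (G.Adj v x ∧ G.Adj v y)))
  symm := ⟨by
    rintro x y ⟨hxy, h⟩
    refine ⟨hxy.symm, ?_⟩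
    rcases h with ⟨h1, h2, h3⟩ | ⟨h1, h2⟩
    · exact Or.inl ⟨h2, h1, fun h => h3 h.symm⟩
    · exact Or.inr ⟨h1.symm, fun h => h2 ⟨h.2, h.1⟩⟩⟩
  loopless := ⟨fun x h => h.1 rfl⟩

/-! Every edge of either graph is a path of length at most two in the other, through `v`;
so the two graphs have the same reachability relation. -/

namespace SimpleGraph

variable {V : Type*}

theorem reachable_le_of_adj_le_reachable {G H : SimpleGraph V} (h : G.Adj ≤ H.Reachable) :
    G.Reachable ≤ H.Reachable := by
  rw [reachable_eq_reflTransGen, reachable_eq_reflTransGen] at *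
  exact Relation.reflTransGen_closed h

theorem Connected.of_adj_le_reachable {G H : SimpleGraph V} (hG : G.Connected)
    (h : G.Adj ≤ H.Reachable) : H.Connected :=
  have := hG.nonempty
  ⟨fun x y => reachable_le_of_adj_le_reachable h x y (hG x y)⟩

theorem localComplement_adj_self_left {G : SimpleGraph V} {v x : V} :
    (localComplement G v).Adj v x ↔ G.Adj v x := by
  constructor
  · rintro ⟨-, ⟨hvv, -⟩ | ⟨hvx, -⟩⟩
    exacts [(G.irrefl hvv).elim, hvx]
  · intro hvx
    exact ⟨G.ne_of_adj hvx, Or.inr ⟨hvx, fun h => G.irrefl h.1⟩⟩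

theorem localComplement_adj_le_reachable (G : SimpleGraph V) (v : V) :
    (localComplement G v).Adj ≤ G.Reachable := by
  rintro x y ⟨-, ⟨hvx, hvy, -⟩ | ⟨hxy, -⟩⟩
  · exact hvx.reachable.symm.trans hvy.reachable
  · exact hxy.reachable

theorem adj_le_localComplement_reachable (G : SimpleGraph V) (v : V) :
    G.Adj ≤ (localComplement G v).Reachable := by
  intro x y hxy
  by_cases hv : G.Adj v x ∧ G.Adj v y
  · have hvx := localComplement_adj_self_left.mpr hv.1
    have hvy := localComplement_adj_self_left.mpr hv.2
    exact hvx.reachable.symm.trans hvy.reachable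
  · exact Adj.reachable ⟨G.ne_of_adj hxy, Or.inr ⟨hxy, hv⟩⟩

end SimpleGraph

/-- If `G'` is obtained from `G` by local complementation at `v`, then `G'` is connected
if and only if `G` is connected. -/
theorem localComplement_connected_iff {V : Type*} (G : SimpleGraph V) (v : V) :
    (localComplement G v).Connected ↔ G.Connected :=
  ⟨fun h => h.of_adj_le_reachable (SimpleGraph.localComplement_adj_le_reachable G v),
    fun h => h.of_adj_le_reachable (SimpleGraph.adj_le_localComplement_reachable G v)⟩
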